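/- arXiv:1804.02935 — 5 statements merged into one kernel-verified Lean document; each statement's English description precedes it below -/
import Mathlib

section
/- Define polynomials P_k and Q_k by T_{2k}(t) = (−1)^k + P_k(t²) and T_{2k−1}(t) = (−1)^{k−1}(2k−1)t + t·Q_{k−1}(t²), where T_n is the Chebyshev polynomial of the first kind. Then for every positive integer k and all real t, Q_k(t²) = (4t²−1)·Q_{k−1}(t²) − 2P_{k−1}(t²) + 4(−1)^{k−1}(2k−1)t². -/
open Polynomial

theorem stmt4 (k : ℕ) (hk : 1 ≤ k) (Qk Qk1 Pk1 : Polynomial ℝ)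
    (hQk : ∀ t : ℝ, (Polynomial.Chebyshev.T ℝ (2 * k + 1)).eval t =
      (-1 : ℝ) ^ k * (2 * k + 1) * t + t * Qk.eval (t ^ 2))
    (hQk1 : ∀ t : ℝ, (Polynomial.Chebyshev.T ℝ (2 * k - 1)).eval t =
      (-1 : ℝ) ^ (k - 1) * (2 * k - 1) * t + t * Qk1.eval (t ^ 2))
    (hPk1 : ∀ t : ℝ, (Polynomial.Chebyshev.T ℝ (2 * (k - 1 : ℕ))).eval t =
      (-1 : ℝ) ^ (k - 1) + Pk1.eval (t ^ 2)) :
    ∀ t : ℝ, Qk.eval (t ^ 2) =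
      (4 * t ^ 2 - 1) * Qk1.eval (t ^ 2) - 2 * Pk1.eval (t ^ 2)
        + 4 * (-1 : ℝ) ^ (k - 1) * (2 * k - 1) * t ^ 2 := by
  -- rewrite index 2*(k-1) as integer 2k-2
  have hcast : ((2 * (k - 1) : ℕ) : ℤ) = 2 * (k : ℤ) - 2 := by
    have : (((k - 1 : ℕ)) : ℤ) = (k : ℤ) - 1 := by
      omega
    push_cast [this]; ring
  have hPk1' : ∀ t : ℝ, (Polynomial.Chebyshev.T ℝ (2 * (k:ℤ) - 2)).eval t =
      (-1 : ℝ) ^ (k - 1) + Pk1.eval (t ^ 2) := by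
    intro t; rw [← hcast]; exact hPk1 t
  have hsign : ((-1 : ℝ)) ^ k = -(-1 : ℝ) ^ (k - 1) := by
    have : k = (k - 1) + 1 := by omega
    rw [this]; ring_nf; simp [pow_succ]
  -- recurrences
  have key : ∀ t : ℝ, t ≠ 0 → Qk.eval (t ^ 2) =
      (4 * t ^ 2 - 1) * Qk1.eval (t ^ 2) - 2 * Pk1.eval (t ^ 2)
        + 4 * (-1 : ℝ) ^ (k - 1) * (2 * k - 1) * t ^ 2 := by
    intro t ht
    have h1 : Polynomial.Chebyshev.T ℝ (2 * (k:ℤ) + 1)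
        = 2 * X * Polynomial.Chebyshev.T ℝ (2 * (k:ℤ)) - Polynomial.Chebyshev.T ℝ (2 * (k:ℤ) - 1) := by
      have := Polynomial.Chebyshev.T_add_two ℝ (2 * (k:ℤ) - 1)
      convert this using 2 <;> ring_nf
    have h2 : Polynomial.Chebyshev.T ℝ (2 * (k:ℤ))
        = 2 * X * Polynomial.Chebyshev.T ℝ (2 * (k:ℤ) - 1) - Polynomial.Chebyshev.T ℝ (2 * (k:ℤ) - 2) := by
      have := Polynomial.Chebyshev.T_add_two ℝ (2 * (k:ℤ) - 2)
      convert this using 2 <;> ring_nf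
    have e1 := congrArg (Polynomial.eval t) h1
    have e2 := congrArg (Polynomial.eval t) h2
    simp only [eval_sub, eval_mul, eval_ofNat, eval_X] at e1 e2
    rw [e2] at e1
    rw [hQk t, hQk1 t, hPk1' t, hsign] at e1
    have hz : t * (Qk.eval (t ^ 2) - ((4 * t ^ 2 - 1) * Qk1.eval (t ^ 2) - 2 * Pk1.eval (t ^ 2)
        + 4 * (-1 : ℝ) ^ (k - 1) * (2 * k - 1) * t ^ 2)) = 0 := by linear_combination e1
    rcases mul_eq_zero.mp hz with h | h
    · exact absurd h ht
    · linarith [sub_eq_zero.mp h]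
  -- extend to t = 0 via polynomial with infinitely many roots
  set F : Polynomial ℝ := Qk.comp (X ^ 2) - ((4 * X ^ 2 - 1) * Qk1.comp (X ^ 2)
      - 2 * Pk1.comp (X ^ 2) + C (4 * (-1 : ℝ) ^ (k - 1) * (2 * k - 1)) * X ^ 2) with hF
  have hroots : { x : ℝ | F.IsRoot x } ⊇ {0}ᶜ := by
    intro t ht
    simp only [Set.mem_compl_iff, Set.mem_singleton_iff] at ht
    simp only [Set.mem_setOf_eq, IsRoot, hF, eval_sub, eval_add, eval_mul, eval_comp,
      eval_pow, eval_X, eval_C, eval_ofNat, eval_one, eval_sub]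
    have := key t ht
    linarith [this]
  have hF0 : F = 0 := Polynomial.eq_zero_of_infinite_isRoot F
    (Set.Infinite.mono hroots ((Set.finite_singleton (0:ℝ)).infinite_compl))
  intro t
  have := congrArg (Polynomial.eval t) hF0
  simp only [hF, eval_sub, eval_add, eval_mul, eval_comp, eval_pow, eval_X, eval_C,
    eval_ofNat, eval_one, eval_zero] at this
  linarith [this]
end

section
/- Define R_k(x) := 2P_k(x) − 4(−1)^k(2k+1)x with P_k given by T_{2k}(t)=(−1)^k+P_k(t²). For every nonnegative integer k and every t ∈ (0,1], |R_k(t²)|/t ≤ 4(2k+1)t + 4·∑_{j=1}^{k} min{1, (2j−1)t}. -/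
/-! Writing `t = cos θ`, the bound `|cos ((2n+1)θ)| ≤ (2n+1)|cos θ|` gives
`|T_{2j-1}(t)| ≤ min 1 ((2j-1)t)` on `[0, 1]`. The three-term recurrence of the Chebyshev
polynomials yields `R_{k+1}(t²) = -R_k(t²) + 4t T_{2k+1}(t) + (-1)^k 8t²`, and the bound follows
by induction on `k` from the triangle inequality. -/

open Polynomial Polynomial.Chebyshev Real

theorem abs_cos_two_mul_add_one_mul_le (n : ℕ) (θ : ℝ) :
    |cos ((2 * n + 1) * θ)| ≤ (2 * n + 1) * |cos θ| := by
  induction n with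
  | zero => simp
  | succ n ih =>
    have h_sin_two_mul : |sin (2 * θ)| ≤ 2 * |cos θ| := by
      rw [sin_two_mul, abs_mul, abs_mul, abs_two, mul_assoc]
      exact mul_le_mul_of_nonneg_left
        (mul_le_of_le_one_left (abs_nonneg _) (abs_sin_le_one θ)) zero_le_two
    calc |cos ((2 * ↑(n + 1) + 1) * θ)|
        = |cos ((2 * n + 1) * θ) * cos (2 * θ) - sin ((2 * n + 1) * θ) * sin (2 * θ)| := by
          rw [← cos_add]; push_cast; ring_nf
      _ ≤ |cos ((2 * n + 1) * θ)| * |cos (2 * θ)| + |sin ((2 * n + 1) * θ)| * |sin (2 * θ)| := by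
          rw [← abs_mul, ← abs_mul]; exact abs_sub _ _
      _ ≤ |cos ((2 * n + 1) * θ)| * 1 + 1 * (2 * |cos θ|) := by
          gcongr
          exacts [abs_cos_le_one _, abs_sin_le_one _]
      _ ≤ (2 * ↑(n + 1) + 1) * |cos θ| := by push_cast; linarith

theorem abs_eval_T_two_mul_add_one_le (n : ℕ) {x : ℝ} (hx : |x| ≤ 1) :
    |(T ℝ (2 * n + 1)).eval x| ≤ (2 * n + 1) * |x| := by
  obtain ⟨hx₁, hx₂⟩ := abs_le.mp hx
  rw [← cos_arccos hx₁ hx₂, T_real_cos]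
  exact_mod_cast abs_cos_two_mul_add_one_mul_le n (arccos x)

/-- The paper's `R_k(t²)`, where `T_{2k}(t) = (-1)^k + P_k(t²)` and
`R_k(x) = 2 P_k(x) - 4 (-1)^k (2k+1) x`. -/
noncomputable def chebyshevR (k : ℕ) (t : ℝ) : ℝ :=
  2 * ((T ℝ (2 * k)).eval t - (-1) ^ k) - 4 * (-1) ^ k * (2 * k + 1) * t ^ 2

theorem chebyshevR_succ (k : ℕ) (t : ℝ) :
    chebyshevR (k + 1) t =
      -chebyshevR k t + 4 * t * (T ℝ (2 * k + 1)).eval t + (-1) ^ k * 8 * t ^ 2 := by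
  have h_rec : T ℝ (2 * ↑(k + 1)) = 2 * X * T ℝ (2 * k + 1) - T ℝ (2 * k) := by
    rw [← T_add_two]; push_cast; ring_nf
  simp only [chebyshevR, h_rec, eval_sub, eval_mul, eval_X, eval_ofNat]
  push_cast
  ring

theorem abs_chebyshevR_le (k : ℕ) {t : ℝ} (ht₀ : 0 ≤ t) (ht₁ : t ≤ 1) :
    |chebyshevR k t| ≤
      t * (4 * (2 * k + 1) * t + 4 * ∑ j ∈ Finset.Icc 1 k, min 1 ((2 * (j : ℝ) - 1) * t)) := by
  induction k with
  | zero => simp [chebyshevR, abs_of_nonneg ht₀, sq, mul_left_comm]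
  | succ k ih =>
    have h_abs_t : |t| ≤ 1 := by rwa [abs_of_nonneg ht₀]
    have h_T : |(T ℝ (2 * k + 1)).eval t| ≤ min 1 ((2 * (↑(k + 1) : ℝ) - 1) * t) := by
      refine le_min (by exact_mod_cast abs_eval_T_real_le_one _ h_abs_t) ?_
      have := abs_eval_T_two_mul_add_one_le k h_abs_t
      rw [abs_of_nonneg ht₀] at this
      push_cast
      linarith
    have h_step : |chebyshevR (k + 1) t| ≤
        |chebyshevR k t| + 4 * t * |(T ℝ (2 * k + 1)).eval t| + 8 * t ^ 2 := by
      rw [chebyshevR_succ]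
      calc _ ≤ |-chebyshevR k t| + |4 * t * (T ℝ (2 * k + 1)).eval t| + |(-1) ^ k * 8 * t ^ 2| :=
            abs_add_three _ _ _
        _ = _ := by simp [abs_mul, abs_of_nonneg ht₀]
    rw [Finset.sum_Icc_succ_top (Nat.le_add_left 1 k)]
    have := mul_le_mul_of_nonneg_left h_T (by positivity : (0 : ℝ) ≤ 4 * t)
    push_cast at this ⊢
    linarith

theorem stmt8 (k : ℕ) (Pk : Polynomial ℝ)
    (hPk : ∀ t : ℝ, (Polynomial.Chebyshev.T ℝ (2 * k)).eval t = (-1 : ℝ) ^ k + Pk.eval (t ^ 2))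
    (t : ℝ) (ht0 : 0 < t) (ht1 : t ≤ 1) :
    |2 * Pk.eval (t ^ 2) - 4 * (-1 : ℝ) ^ k * (2 * k + 1) * t ^ 2| / t ≤
      4 * (2 * k + 1) * t + 4 * ∑ j ∈ Finset.Icc 1 k, min 1 ((2 * (j : ℝ) - 1) * t) := by
  have h_R : 2 * Pk.eval (t ^ 2) - 4 * (-1 : ℝ) ^ k * (2 * k + 1) * t ^ 2 = chebyshevR k t := by
    simp only [chebyshevR, hPk, add_sub_cancel_left]
  rw [h_R, div_le_iff₀ ht0, mul_comm]
  exact abs_chebyshevR_le k ht0.le ht1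
end

section
/- Let Q_k be the polynomial with Q_k(0)=0 defined by T_{2k+1}(t) = (−1)^k(2k+1)t + t·Q_k(t²). For every nonnegative integer k and every t ∈ (0, 1/√2], |Q_k(t²)|/t ≤ 4k²t + 4·∑_{j=1}^{k−1} (k−j)·min{1, (2j−1)t}. -/
open Polynomial Polynomial.Chebyshev Finset

lemma absT (n : ℤ) (x : ℝ) (hx : |x| ≤ 1) : |(T ℝ n).eval x| ≤ 1 := by
  have h := abs_le.mp hx
  have : x = Real.cos (Real.arccos x) := (Real.cos_arccos h.1 h.2).symm
  rw [this, T_real_cos]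
  exact Real.abs_cos_le_one _

lemma Trec3 (n : ℤ) : T ℝ (n + 3) = (4 * X ^ 2 - 1) * T ℝ (n + 1) - 2 * X * T ℝ n := by
  have h1 : T ℝ (n + 3) = 2 * X * T ℝ (n + 2) - T ℝ (n + 1) := by
    simpa [show n + 1 + 2 = n + 3 by ring, show n + 1 + 1 = n + 2 by ring] using T_add_two ℝ (n + 1)
  rw [h1, T_add_two ℝ n]; ring

lemma Todd (m : ℕ) (x : ℝ) (h0 : 0 ≤ x) (h1 : x ≤ 1) :
    |(T ℝ (2 * (m : ℤ) + 1)).eval x| ≤ (2 * (m : ℝ) + 1) * x := by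
  induction m with
  | zero => simp [T_one, abs_of_nonneg h0]
  | succ m ih =>
    have hidx : (2 * (((m : ℕ) + 1 : ℕ) : ℤ) + 1) = (2 * (m : ℤ) + 1) + 2 := by push_cast; ring
    rw [hidx, T_add_two]
    have hT1 : |(T ℝ (2 * (m : ℤ) + 1 + 1)).eval x| ≤ 1 :=
      absT _ x (by rw [abs_of_nonneg h0]; exact h1)
    simp only [eval_sub, eval_mul, eval_ofNat, eval_X]
    have h2 : |2 * x * (T ℝ (2 * (m : ℤ) + 1 + 1)).eval x| ≤ 2 * x := by
      rw [abs_mul]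
      calc |2 * x| * |(T ℝ (2 * (m : ℤ) + 1 + 1)).eval x| ≤ |2 * x| * 1 :=
            mul_le_mul_of_nonneg_left hT1 (abs_nonneg _)
        _ = 2 * x := by rw [mul_one, abs_of_nonneg (by linarith)]
    have habs := abs_sub (2 * x * (T ℝ (2 * (m : ℤ) + 1 + 1)).eval x)
      ((T ℝ (2 * (m : ℤ) + 1)).eval x)
    push_cast
    linarith

lemma Abound (m : ℕ) (x : ℝ) (h0 : 0 ≤ x) (h1 : x ≤ 1) :
    |(T ℝ (2 * (m : ℤ))).eval x - (-1 : ℝ) ^ m| ≤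
      2 * x * ∑ j ∈ Finset.Icc 1 m, min 1 ((2 * (j : ℝ) - 1) * x) := by
  induction m with
  | zero => simp [T_zero]
  | succ m ih =>
    have hidx : (2 * (((m : ℕ) + 1 : ℕ) : ℤ)) = (2 * (m : ℤ)) + 2 := by push_cast; ring
    rw [hidx, T_add_two]
    have hmin : |(T ℝ (2 * (m : ℤ) + 1)).eval x| ≤ min 1 ((2 * ((m : ℝ) + 1) - 1) * x) := by
      refine le_min (absT _ x (by rw [abs_of_nonneg h0]; exact h1)) ?_
      calc |(T ℝ (2 * (m : ℤ) + 1)).eval x| ≤ (2 * (m : ℝ) + 1) * x := Todd m x h0 h1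
        _ = (2 * ((m : ℝ) + 1) - 1) * x := by ring
    simp only [eval_sub, eval_mul, eval_ofNat, eval_X]
    have key : 2 * x * (T ℝ (2 * (m : ℤ) + 1)).eval x - (T ℝ (2 * (m : ℤ))).eval x
          - (-1 : ℝ) ^ (m + 1)
        = 2 * x * (T ℝ (2 * (m : ℤ) + 1)).eval x
          - ((T ℝ (2 * (m : ℤ))).eval x - (-1 : ℝ) ^ m) := by
      rw [pow_succ]; ring
    rw [key, Finset.sum_Icc_succ_top (by omega : 1 ≤ m + 1)]
    push_cast
    have habs := abs_sub (2 * x * (T ℝ (2 * (m : ℤ) + 1)).eval x)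
      ((T ℝ (2 * (m : ℤ))).eval x - (-1 : ℝ) ^ m)
    have h2 : |2 * x * (T ℝ (2 * (m : ℤ) + 1)).eval x| ≤
        2 * x * min 1 ((2 * ((m : ℝ) + 1) - 1) * x) := by
      rw [abs_mul, abs_of_nonneg (by linarith : (0:ℝ) ≤ 2 * x)]
      exact mul_le_mul_of_nonneg_left hmin (by linarith)
    nlinarith [habs, h2, ih]

lemma sum_shift (k : ℕ) (x : ℝ) :
    ∑ j ∈ Finset.Icc 1 (k + 1 - 1), (((k : ℝ) + 1) - j) * min 1 ((2 * (j : ℝ) - 1) * x)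
      = ∑ j ∈ Finset.Icc 1 (k - 1), ((k : ℝ) - j) * min 1 ((2 * (j : ℝ) - 1) * x)
        + ∑ j ∈ Finset.Icc 1 k, min 1 ((2 * (j : ℝ) - 1) * x) := by
  cases k with
  | zero => simp
  | succ n =>
    have h1 : n + 1 + 1 - 1 = n + 1 := rfl
    have h2 : n + 1 - 1 = n := rfl
    rw [h1, h2]
    push_cast
    rw [show (∑ j ∈ Finset.Icc 1 (n + 1),
        (((n : ℝ) + 1 + 1) - (j:ℝ)) * min 1 ((2 * (j : ℝ) - 1) * x))
      = ∑ j ∈ Finset.Icc 1 (n + 1),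
        ((((n : ℝ) + 1) - (j:ℝ)) * min 1 ((2 * (j : ℝ) - 1) * x) + min 1 ((2 * (j : ℝ) - 1) * x))
      from Finset.sum_congr rfl (fun j _ => by ring), Finset.sum_add_distrib]
    congr 1
    rw [Finset.sum_Icc_succ_top (by omega : 1 ≤ n + 1)]
    push_cast
    simp

lemma Gbound (k : ℕ) (x : ℝ) (h0 : 0 ≤ x) (h2 : x ^ 2 ≤ 1 / 2) :
    |(T ℝ (2 * (k : ℤ) + 1)).eval x - (-1 : ℝ) ^ k * (2 * (k : ℝ) + 1) * x| ≤
      4 * (k : ℝ) ^ 2 * x ^ 3 +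
        4 * x ^ 2 * ∑ j ∈ Finset.Icc 1 (k - 1), ((k : ℝ) - j) * min 1 ((2 * (j : ℝ) - 1) * x) := by
  have h1 : x ≤ 1 := by nlinarith
  induction k with
  | zero => simp [T_one]
  | succ k ih =>
    have hidx : (2 * (((k : ℕ) + 1 : ℕ) : ℤ) + 1) = (2 * (k : ℤ)) + 3 := by push_cast; ring
    rw [hidx, Trec3]
    have hi1 : (2 * (k : ℤ)) + 1 = 2 * (k : ℤ) + 1 := rfl
    simp only [eval_sub, eval_mul, eval_ofNat, eval_pow, eval_X, eval_one]
    set a : ℝ := (T ℝ (2 * (k : ℤ))).eval x with ha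
    set b : ℝ := (T ℝ (2 * (k : ℤ) + 1)).eval x with hb
    have key : (4 * x ^ 2 - 1) * b - 2 * x * a - (-1 : ℝ) ^ (k + 1) * (2 * ((k : ℝ) + 1) + 1) * x
        = (4 * x ^ 2 - 1) * (b - (-1 : ℝ) ^ k * (2 * (k : ℝ) + 1) * x)
          - 2 * x * (a - (-1 : ℝ) ^ k)
          + (-1 : ℝ) ^ k * 4 * (2 * (k : ℝ) + 1) * x ^ 3 := by
      rw [pow_succ]; ring
    push_cast
    rw [key]
    have hA := Abound k x h0 h1
    have habs1 : |(4 * x ^ 2 - 1) * (b - (-1 : ℝ) ^ k * (2 * (k : ℝ) + 1) * x)|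
        ≤ |b - (-1 : ℝ) ^ k * (2 * (k : ℝ) + 1) * x| := by
      rw [abs_mul]
      have : |4 * x ^ 2 - 1| ≤ 1 := by rw [abs_le]; constructor <;> nlinarith
      nlinarith [abs_nonneg (b - (-1 : ℝ) ^ k * (2 * (k : ℝ) + 1) * x)]
    have habs2 : |2 * x * (a - (-1 : ℝ) ^ k)| ≤
        2 * x * (2 * x * ∑ j ∈ Finset.Icc 1 k, min 1 ((2 * (j : ℝ) - 1) * x)) := by
      rw [abs_mul, abs_of_nonneg (by linarith : (0:ℝ) ≤ 2 * x)]
      exact mul_le_mul_of_nonneg_left hA (by linarith)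
    have habs3 : |(-1 : ℝ) ^ k * 4 * (2 * (k : ℝ) + 1) * x ^ 3|
        = 4 * (2 * (k : ℝ) + 1) * x ^ 3 := by
      rw [abs_mul, abs_mul, abs_mul, abs_pow, abs_neg, abs_one, one_pow, one_mul]
      rw [abs_of_nonneg (by norm_num : (0:ℝ) ≤ 4),
        abs_of_nonneg (by positivity : (0:ℝ) ≤ 2 * (k : ℝ) + 1),
        abs_of_nonneg (by positivity : (0:ℝ) ≤ x ^ 3)]
    have htri : |(4 * x ^ 2 - 1) * (b - (-1 : ℝ) ^ k * (2 * (k : ℝ) + 1) * x)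
          - 2 * x * (a - (-1 : ℝ) ^ k)
          + (-1 : ℝ) ^ k * 4 * (2 * (k : ℝ) + 1) * x ^ 3|
        ≤ |(4 * x ^ 2 - 1) * (b - (-1 : ℝ) ^ k * (2 * (k : ℝ) + 1) * x)|
          + |2 * x * (a - (-1 : ℝ) ^ k)|
          + |(-1 : ℝ) ^ k * 4 * (2 * (k : ℝ) + 1) * x ^ 3| := by
      calc _ ≤ |(4 * x ^ 2 - 1) * (b - (-1 : ℝ) ^ k * (2 * (k : ℝ) + 1) * x)
            - 2 * x * (a - (-1 : ℝ) ^ k)|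
          + |(-1 : ℝ) ^ k * 4 * (2 * (k : ℝ) + 1) * x ^ 3| := abs_add_le _ _
        _ ≤ _ := by gcongr; exact abs_sub _ _
    have hsum := sum_shift k x
    simp only [Nat.add_sub_cancel] at hsum
    rw [hsum]
    have hxs : (0:ℝ) ≤ x ^ 2 := by positivity
    nlinarith [htri, habs1, habs2, habs3, ih]

theorem stmt9 (k : ℕ) (Qk : Polynomial ℝ) (hQk0 : Qk.eval 0 = 0)
    (hQk : ∀ s : ℝ, (Polynomial.Chebyshev.T ℝ (2 * k + 1)).eval s =
      (-1 : ℝ) ^ k * (2 * k + 1) * s + s * Qk.eval (s ^ 2))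
    (t : ℝ) (ht0 : 0 < t) (ht1 : t ≤ 1 / Real.sqrt 2) :
    |Qk.eval (t ^ 2)| / t ≤
      4 * (k : ℝ) ^ 2 * t + 4 * ∑ j ∈ Finset.Icc 1 (k - 1), ((k : ℝ) - j) * min 1 ((2 * (j : ℝ) - 1) * t) := by
  have hs2 : (0:ℝ) < Real.sqrt 2 := Real.sqrt_pos.mpr (by norm_num)
  have hsq : Real.sqrt 2 ^ 2 = 2 := Real.sq_sqrt (by norm_num)
  have h2 : t ^ 2 ≤ 1 / 2 := by
    have h := (le_div_iff₀ hs2).mp ht1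
    nlinarith
  have hG := Gbound k t ht0.le h2
  have hQ : (T ℝ (2 * (k : ℤ) + 1)).eval t - (-1 : ℝ) ^ k * (2 * (k : ℝ) + 1) * t
      = t * Qk.eval (t ^ 2) := by
    have := hQk t
    push_cast at this ⊢
    rw [this]; ring
  rw [hQ, abs_mul, abs_of_pos ht0] at hG
  have hS : 0 ≤ ∑ j ∈ Finset.Icc 1 (k-1), ((k : ℝ) - j) * min 1 ((2 * (j : ℝ) - 1) * t) := by
    apply Finset.sum_nonneg
    intro j hj
    obtain ⟨hj1, hj2⟩ := Finset.mem_Icc.mp hj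
    have hjk : (j:ℝ) ≤ (k:ℝ) := by exact_mod_cast (by omega : j ≤ k)
    have hj1' : (1:ℝ) ≤ (j:ℝ) := by exact_mod_cast hj1
    have hm : (0:ℝ) ≤ min 1 ((2*(j:ℝ)-1)*t) := le_min (by norm_num) (by nlinarith [ht0.le])
    nlinarith
  rw [div_le_iff₀ ht0]
  nlinarith [hG, hS, abs_nonneg (Qk.eval (t ^ 2)), ht0]
end

section
/- For every positive integer ν, define C_ν := sup_{t∈(0,1]} |1 − (−1)^ν·T_{2ν+1}(√t)/((2ν+1)√t)| / √t, where T_n is the Chebyshev polynomial of the first kind. Then C_ν/(2ν+1) ≤ 4/9, with equality when ν = 1. -/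
open Finset Real

lemma aux_abs_sin (θ : ℝ) (k : ℕ) : |Real.sin (k*θ)| ≤ k * |Real.sin θ| := by
  induction k with
  | zero => simp
  | succ n ih =>
    push_cast
    have : ((n:ℝ)+1)*θ = n*θ + θ := by ring
    rw [this, Real.sin_add]
    calc |Real.sin (n*θ) * Real.cos θ + Real.cos (n*θ) * Real.sin θ|
        ≤ |Real.sin (n*θ) * Real.cos θ| + |Real.cos (n*θ) * Real.sin θ| := abs_add_le _ _
      _ ≤ |Real.sin (n*θ)| * 1 + 1 * |Real.sin θ| := by
          rw [abs_mul, abs_mul]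
          gcongr
          · exact Real.abs_cos_le_one θ
          · exact Real.abs_cos_le_one _
      _ ≤ (n:ℝ) * |Real.sin θ| + 1 * |Real.sin θ| := by
          rw [mul_one]
          gcongr
      _ = ((n:ℝ)+1) * |Real.sin θ| := by ring

lemma aux_identity (θ : ℝ) (n : ℕ) :
    (2*n+1)*Real.sin θ - Real.sin ((2*n+1)*θ) =
      4 * Real.sin θ * ∑ k ∈ Finset.Ioc 0 n, Real.sin (k*θ)^2 := by
  induction n with
  | zero => simp
  | succ n ih =>
    rw [Finset.sum_Ioc_succ_top (Nat.zero_le _), mul_add, ← ih]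
    have h1 : (2*((n:ℝ)+1)+1)*θ = 2*(((n:ℝ)+1)*θ) + θ := by ring
    have h2 : (2*(n:ℝ)+1)*θ = 2*(((n:ℝ)+1)*θ) - θ := by ring
    push_cast
    rw [h1, h2, Real.sin_add, Real.sin_sub, Real.cos_two_mul]
    have h3 := Real.sin_sq_add_cos_sq (((n:ℝ)+1)*θ)
    linear_combination (-4*Real.sin θ) * h3


lemma aux_sum_sq (m : ℕ) : ∑ k ∈ Finset.Ioc 0 m, (k:ℝ)^2 = m*(m+1)*(2*m+1)/6 := by
  induction m with
  | zero => simp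
  | succ n ih =>
    rw [Finset.sum_Ioc_succ_top (Nat.zero_le _), ih]
    push_cast
    ring

set_option maxHeartbeats 1000000 in
lemma aux_key_sum (ν : ℕ) (hν : 1 ≤ ν) (s : ℝ) (hs0 : 0 < s) (hs1 : s ≤ 1)
    (a : ℕ → ℝ) (h0 : ∀ k, 0 ≤ a k) (h1 : ∀ k, a k ≤ 1)
    (h2 : ∀ k, a k ≤ (k:ℝ)^2 * s^2) :
    ∑ k ∈ Finset.Ioc 0 ν, a k ≤ (2*ν+1)^2 * s / 9 := by
  have hs1' : (1:ℝ) ≤ 1/s := by rw [le_div_iff₀ hs0]; linarith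
  obtain ⟨m, hm⟩ : ∃ m, m = min ν ⌊1/s⌋₊ := ⟨_, rfl⟩
  have hm_le : m ≤ ν := hm ▸ min_le_left _ _
  have hm1 : 1 ≤ m := by
    rw [hm]
    refine le_min hν (Nat.le_floor ?_)
    exact_mod_cast hs1'
  have hms : (m:ℝ) * s ≤ 1 := by
    have h1' : (m:ℝ) ≤ 1/s := le_trans (by exact_mod_cast Nat.cast_le.mpr (hm ▸ min_le_right ν ⌊1/s⌋₊)) ?_
    · calc (m:ℝ) * s ≤ (1/s) * s := by gcongr
        _ = 1 := by field_simp
    · exact Nat.floor_le (by positivity)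
  -- split the sum
  rw [← Finset.sum_Ioc_consecutive a (Nat.zero_le m) hm_le]
  have B1 : ∑ k ∈ Finset.Ioc 0 m, a k ≤ (m:ℝ)*(m+1)*(2*m+1)/6 * s^2 := by
    calc ∑ k ∈ Finset.Ioc 0 m, a k ≤ ∑ k ∈ Finset.Ioc 0 m, (k:ℝ)^2*s^2 :=
          Finset.sum_le_sum (fun k _ => h2 k)
      _ = (∑ k ∈ Finset.Ioc 0 m, (k:ℝ)^2)*s^2 := by rw [Finset.sum_mul]
      _ = (m:ℝ)*(m+1)*(2*m+1)/6 * s^2 := by rw [aux_sum_sq]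
  have B2 : ∑ k ∈ Finset.Ioc m ν, a k ≤ (ν:ℝ) - m := by
    calc ∑ k ∈ Finset.Ioc m ν, a k ≤ (Finset.Ioc m ν).card • (1:ℝ) :=
          Finset.sum_le_card_nsmul _ _ _ (fun k _ => h1 k)
      _ = ((ν - m : ℕ) : ℝ) := by rw [Nat.card_Ioc]; simp
      _ = (ν:ℝ) - m := by rw [Nat.cast_sub hm_le]
  have hMV : (m:ℝ) ≤ (ν:ℝ) := by exact_mod_cast hm_le
  rcases eq_or_lt_of_le hm_le with heq | hlt
  · -- m = ν, so ν * s ≤ 1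
    subst heq
    have hν' : (1:ℝ) ≤ (m:ℝ) := by exact_mod_cast hm1
    have key : 3*((m:ℝ)*s)*((m:ℝ)+1) ≤ 2*(2*(m:ℝ)+1) := by
      nlinarith [mul_le_mul_of_nonneg_right hms (show (0:ℝ) ≤ (m:ℝ)+1 by linarith)]
    have key2 := mul_le_mul_of_nonneg_left key
      (show (0:ℝ) ≤ s*(2*(m:ℝ)+1)/18 by positivity)
    nlinarith [B1, B2, key2]
  · -- m < ν, so m = ⌊1/s⌋₊ and 1 < (m+1)*s
    have hfl : m = ⌊1/s⌋₊ := by omega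
    have h1s : 1 < ((m:ℝ)+1) * s := by
      rw [← div_lt_iff₀ hs0]
      have := Nat.lt_floor_add_one (1/s)
      rw [← hfl] at this
      exact_mod_cast this
    have hVM : (0:ℝ) ≤ (ν:ℝ) - m := by linarith
    have e2 : (ν:ℝ) - m ≤ ((ν:ℝ)-m)*(((m:ℝ)+1)*s) := le_mul_of_one_le_right hVM h1s.le
    have e1 : (m:ℝ)*(m+1)*(2*m+1)/6 * s^2 ≤ s*((m:ℝ)+1)*(2*(m:ℝ)+1)/6 := by
      nlinarith [mul_le_mul_of_nonneg_right hms
        (show (0:ℝ) ≤ s*((m:ℝ)+1)*(2*(m:ℝ)+1)/6 by positivity)]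
    rcases le_or_gt 4 ν with hν4 | hν4
    · have hV4 : (4:ℝ) ≤ (ν:ℝ) := by exact_mod_cast hν4
      have hint : ((m:ℝ)+1)*(18*(ν:ℝ)-12*(m:ℝ)+3) ≤ 8*(ν:ℝ)^2+8*(ν:ℝ)+2 := by
        nlinarith [sq_nonneg (24*(m:ℝ) - 18*(ν:ℝ) + 9), hV4]
      have hint2 := mul_le_mul_of_nonneg_left hint (show (0:ℝ) ≤ s/18 by positivity)
      nlinarith [B1, B2, e1, e2, hint2]
    · -- ν ∈ {2, 3}
      have hν23 : ν = 2 ∨ ν = 3 := by omega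
      rcases hν23 with rfl | rfl
      · have hmi : m = 1 := by omega
        subst hmi
        push_cast at B1 B2 h1s hms ⊢
        nlinarith [B1, B2, mul_nonneg (by linarith : (0:ℝ) ≤ 2*s-1) (by linarith : (0:ℝ) ≤ 1-s)]
      · have hmi : m = 1 ∨ m = 2 := by omega
        rcases hmi with rfl | rfl
        · push_cast at B1 B2 h1s hms ⊢
          nlinarith [B1, B2, mul_nonneg (by linarith : (0:ℝ) ≤ 2*s-1) (by linarith : (0:ℝ) ≤ 1-s)]
        · push_cast at B1 B2 h1s hms ⊢
          nlinarith [B1, B2, mul_nonneg (by linarith : (0:ℝ) ≤ 3*s-1) (by linarith : (0:ℝ) ≤ 1-2*s)]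

lemma key_trig (ν : ℕ) (hν : 1 ≤ ν) (θ : ℝ) (h0 : 0 < Real.sin θ) :
    |(2*ν+1)*Real.sin θ - Real.sin ((2*ν+1)*θ)| ≤ 4/9 * (2*ν+1)^2 * Real.sin θ^2 := by
  have hs1 : Real.sin θ ≤ 1 := Real.sin_le_one θ
  have hsum : ∑ k ∈ Finset.Ioc 0 ν, Real.sin (k*θ)^2 ≤ (2*ν+1)^2 * Real.sin θ / 9 := by
    refine aux_key_sum ν hν _ h0 hs1 _ (fun k => sq_nonneg _) (fun k => Real.sin_sq_le_one _) ?_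
    intro k
    have h := aux_abs_sin θ k
    rw [abs_of_pos h0] at h
    calc Real.sin (k*θ)^2 = |Real.sin (k*θ)|^2 := (sq_abs _).symm
      _ ≤ ((k:ℝ) * Real.sin θ)^2 := by
          apply pow_le_pow_left₀ (abs_nonneg _) h
      _ = (k:ℝ)^2 * Real.sin θ^2 := by ring
  rw [aux_identity]
  have hpos : 0 ≤ 4 * Real.sin θ * ∑ k ∈ Finset.Ioc 0 ν, Real.sin (k*θ)^2 := by
    apply mul_nonneg (by positivity)
    exact Finset.sum_nonneg (fun k _ => sq_nonneg _)
  rw [abs_of_nonneg hpos]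
  nlinarith [mul_le_mul_of_nonneg_left hsum (show (0:ℝ) ≤ 4 * Real.sin θ by positivity)]

lemma cheb_eval (ν : ℕ) (θ : ℝ) :
    (Polynomial.Chebyshev.T ℝ (2*ν+1)).eval (Real.sin θ)
      = (-1:ℝ)^ν * Real.sin ((2*ν+1)*θ) := by
  have h1 : Real.sin θ = Real.cos (π/2 - θ) := (Real.cos_pi_div_two_sub θ).symm
  rw [h1, Polynomial.Chebyshev.T_real_cos]
  have h2 : ((2*(ν:ℤ)+1 : ℤ):ℝ) * (π/2 - θ) = (ν:ℝ)*π - ((2*(ν:ℝ)+1)*θ - π/2) := by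
    push_cast; ring
  push_cast
  rw [show (2*(ν:ℝ)+1) * (π/2 - θ) = (ν:ℝ)*π - ((2*(ν:ℝ)+1)*θ - π/2) by ring,
    Real.cos_nat_mul_pi_sub, Real.cos_sub_pi_div_two]

lemma pointwise (ν : ℕ) (hν : 1 ≤ ν) (t : ℝ) (ht0 : 0 < t) (ht1 : t ≤ 1) :
    |1 - (-1:ℝ)^ν * (Polynomial.Chebyshev.T ℝ (2*ν+1)).eval (Real.sqrt t) /
      ((2*ν+1) * Real.sqrt t)| / Real.sqrt t ≤ 4/9 * (2*ν+1) := by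
  have hx0 : 0 < Real.sqrt t := Real.sqrt_pos.mpr ht0
  have hx1 : Real.sqrt t ≤ 1 := Real.sqrt_le_one.mpr ht1
  set x := Real.sqrt t with hx
  set θ := Real.arcsin x with hθ
  have hsin : Real.sin θ = x := Real.sin_arcsin (by linarith) hx1
  have heval : (Polynomial.Chebyshev.T ℝ (2*ν+1)).eval x
      = (-1:ℝ)^ν * Real.sin ((2*ν+1)*θ) := by rw [← hsin, cheb_eval]
  have hNpos : (0:ℝ) < 2*ν+1 := by positivity
  have key := key_trig ν hν θ (by rw [hsin]; exact hx0)
  rw [hsin] at key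
  have hpow : (-1:ℝ)^ν * (-1:ℝ)^ν = 1 := by rw [← mul_pow]; norm_num
  rw [heval, ← mul_assoc, hpow, one_mul]
  have e2 : 1 - Real.sin ((2*ν+1)*θ) / ((2*ν+1)*x)
      = ((2*ν+1)*x - Real.sin ((2*ν+1)*θ)) / ((2*ν+1)*x) := by
    field_simp
  rw [e2, abs_div, abs_of_pos (mul_pos hNpos hx0), div_div, div_le_iff₀ (by positivity)]
  calc |(2*ν+1)*x - Real.sin ((2*ν+1)*θ)| ≤ 4/9 * (2*ν+1)^2 * x^2 := key
    _ = 4/9 * (2*ν+1) * ((2*ν+1)*x*x) := by ring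


theorem stmt11 :
    (∀ ν : ℕ, 1 ≤ ν →
      sSup ((fun t : ℝ =>
        |1 - (-1 : ℝ) ^ ν * (Polynomial.Chebyshev.T ℝ (2 * ν + 1)).eval (Real.sqrt t) /
          ((2 * ν + 1) * Real.sqrt t)| / Real.sqrt t) '' Set.Ioc 0 1) / (2 * ν + 1) ≤ 4 / 9) ∧
    sSup ((fun t : ℝ =>
        |1 - (-1 : ℝ) ^ (1 : ℕ) * (Polynomial.Chebyshev.T ℝ (2 * 1 + 1)).eval (Real.sqrt t) /
          ((2 * 1 + 1) * Real.sqrt t)| / Real.sqrt t) '' Set.Ioc 0 1) / (2 * 1 + 1) = 4 / 9 := by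
  constructor
  · intro ν hν
    have hN : (0:ℝ) < 2*ν+1 := by positivity
    rw [div_le_iff₀ hN]
    apply Real.sSup_le
    · rintro y ⟨t, ⟨ht0, ht1⟩, rfl⟩
      exact pointwise ν hν t ht0 ht1
    · positivity
  · have hub : ∀ y ∈ ((fun t : ℝ =>
        |1 - (-1 : ℝ) ^ (1 : ℕ) * (Polynomial.Chebyshev.T ℝ (2 * 1 + 1)).eval (Real.sqrt t) /
          ((2 * 1 + 1) * Real.sqrt t)| / Real.sqrt t) '' Set.Ioc 0 1), y ≤ 4/3 := by
      rintro y ⟨t, ⟨ht0, ht1⟩, rfl⟩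
      have h := pointwise 1 le_rfl t ht0 ht1
      norm_num at h ⊢
      convert h using 4 <;> norm_num
    have hT3 : (Polynomial.Chebyshev.T ℝ (2 * 1 + 1)).eval (1:ℝ) = 1 := by
      have h3 : Polynomial.Chebyshev.T ℝ (2 * 1 + 1)
          = 2 * Polynomial.X * Polynomial.Chebyshev.T ℝ 2 - Polynomial.Chebyshev.T ℝ 1 := by
        simpa using Polynomial.Chebyshev.T_add_two ℝ 1
      rw [h3, Polynomial.Chebyshev.T_two, Polynomial.Chebyshev.T_one]
      simp
      norm_num
    have f1 : (fun t : ℝ =>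
        |1 - (-1 : ℝ) ^ (1 : ℕ) * (Polynomial.Chebyshev.T ℝ (2 * 1 + 1)).eval (Real.sqrt t) /
          ((2 * 1 + 1) * Real.sqrt t)| / Real.sqrt t) 1 = 4/3 := by
      simp only [Real.sqrt_one, hT3]
      norm_num
    have hmem : (4/3 : ℝ) ∈ ((fun t : ℝ =>
        |1 - (-1 : ℝ) ^ (1 : ℕ) * (Polynomial.Chebyshev.T ℝ (2 * 1 + 1)).eval (Real.sqrt t) /
          ((2 * 1 + 1) * Real.sqrt t)| / Real.sqrt t) '' Set.Ioc 0 1) :=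
      ⟨1, by norm_num, f1⟩
    have hsup : sSup ((fun t : ℝ =>
        |1 - (-1 : ℝ) ^ (1 : ℕ) * (Polynomial.Chebyshev.T ℝ (2 * 1 + 1)).eval (Real.sqrt t) /
          ((2 * 1 + 1) * Real.sqrt t)| / Real.sqrt t) '' Set.Ioc 0 1) = 4/3 := by
      apply le_antisymm
      · exact Real.sSup_le hub (by norm_num)
      · exact le_csSup ⟨4/3, hub⟩ hmem
    rw [hsup]
    norm_num
end

section
/- For every positive integer ν ≥ 31 and every t ∈ (0,1], |Q_ν(t²)|/((2ν+1)²t) ≤ u₁(ν)·(2ν+1)·t + u₂(ν) where u₁(ν) = (176ν³+1860ν²+100ν)/(375(2ν+1)³) and u₂(ν) = (18ν²+30ν)/(25(2ν+1)²), provided (2ν+1)t ≤ (2ν+1)/√2; here Q_ν(0)=0 is determined by T_{2ν+1}(t) = (−1)^ν(2ν+1)t + t·Q_ν(t²). -/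
/-!
Write `t = sin θ` with `θ = arcsin t` and `N = 2ν + 1`. Since `T_N (sin θ) = (-1)^ν sin (Nθ)`, the
defining identity of `Q_ν` gives `t Q_ν(t²) = ±(sin (Nθ) - Nt)`, so everything reduces to
`|sin (Nθ) - Nt| ≤ (Nt)² (22/375 · Nt + 9/50)`; the constants `22/375` and `9/50` are the limits
of `u₁(ν)` and `u₂(ν)` and lie below them. For `Nt ≥ 4` the trivial bound `1 + Nt` suffices.
For `Nt < 4` we have `t ≤ 4/63`, hence `θ ≤ 1/8`, and `θ - θ³/6 ≤ t` gives
`t ≤ θ ≤ (384/383) t`. The upper bound then comes from `sin (Nθ) - Nt ≤ N(θ - t) ≤ Nθ³/6`, and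
the lower one from the Taylor bound `sin y ≥ y - y³/6 + y⁵/120 - y⁷/5040` at `y = Nθ`.
-/

open Real Finset Nat

lemma nonneg_of_hasDerivAt_nonneg {f f' : ℝ → ℝ} (hf : ∀ x, HasDerivAt f (f' x) x)
    (h0 : f 0 = 0) (hf' : ∀ x, 0 ≤ x → 0 ≤ f' x) {y : ℝ} (hy : 0 ≤ y) : 0 ≤ f y := by
  have hmono : MonotoneOn f (Set.Ici 0) :=
    monotoneOn_of_hasDerivWithinAt_nonneg (convex_Ici 0)
      (fun x _ ↦ (hf x).continuousAt.continuousWithinAt) (fun x _ ↦ (hf x).hasDerivWithinAt)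
      (fun x hx ↦ hf' x (interior_subset hx))
  simpa [h0] using hmono Set.self_mem_Ici hy hy

namespace Real

noncomputable def sinTaylor (n : ℕ) (x : ℝ) : ℝ :=
  ∑ k ∈ range n, (-1) ^ k * (x ^ (2 * k + 1) / (2 * k + 1)!)

noncomputable def cosTaylor (n : ℕ) (x : ℝ) : ℝ :=
  ∑ k ∈ range n, (-1) ^ k * (x ^ (2 * k) / (2 * k)!)

lemma hasDerivAt_pow_div_factorial (m : ℕ) (x : ℝ) :
    HasDerivAt (fun y : ℝ ↦ y ^ (m + 1) / (m + 1)!) (x ^ m / m !) x := by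
  refine ((hasDerivAt_pow (m + 1) x).div_const ((m + 1)! : ℝ)).congr_deriv ?_
  rw [Nat.factorial_succ]; push_cast
  field_simp

lemma hasDerivAt_sinTaylor (n : ℕ) (x : ℝ) : HasDerivAt (sinTaylor n) (cosTaylor n x) x :=
  HasDerivAt.fun_sum fun k _ ↦
    (hasDerivAt_pow_div_factorial (2 * k) x).const_mul ((-1 : ℝ) ^ k)

lemma hasDerivAt_cosTaylor_succ (n : ℕ) (x : ℝ) :
    HasDerivAt (cosTaylor (n + 1)) (-sinTaylor n x) x := by
  have h : cosTaylor (n + 1) =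
      fun y ↦ ∑ k ∈ range n, (-1 : ℝ) ^ (k + 1) * (y ^ (2 * (k + 1)) / (2 * (k + 1))!) + 1 := by
    ext y; simp [cosTaylor, sum_range_succ']
  have hterm (k : ℕ) : HasDerivAt (fun y : ℝ ↦ y ^ (2 * (k + 1)) / (2 * (k + 1))!)
      (x ^ (2 * k + 1) / (2 * k + 1)!) x := by
    rw [show 2 * (k + 1) = 2 * k + 1 + 1 by ring]
    exact hasDerivAt_pow_div_factorial (2 * k + 1) x
  rw [h]
  refine ((HasDerivAt.fun_sum fun k _ ↦ (hterm k).const_mul _).add_const 1).congr_deriv ?_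
  simp [sinTaylor, pow_succ, ← sum_neg_distrib]

theorem sin_sub_sinTaylor_alternating {n : ℕ} (hn : 1 ≤ n) {y : ℝ} (hy : 0 ≤ y) :
    0 ≤ (-1) ^ n * (sin y - sinTaylor n y) := by
  induction n, hn using Nat.le_induction generalizing y with
  | base => simpa [sinTaylor] using sin_le hy
  | succ n _ ih =>
    have hcos : ∀ z, 0 ≤ z → 0 ≤ (-1) ^ (n + 1) * (cos z - cosTaylor (n + 1) z) := by
      intro z hz
      refine nonneg_of_hasDerivAt_nonneg (fun x ↦ (((hasDerivAt_cos x).sub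
        (hasDerivAt_cosTaylor_succ n x)).const_mul _)) (by simp [cosTaylor, sum_range_succ']) ?_ hz
      intro x hx
      convert ih hx using 1
      ring
    exact nonneg_of_hasDerivAt_nonneg (fun x ↦ (((hasDerivAt_sin x).sub
        (hasDerivAt_sinTaylor (n + 1) x)).const_mul _)) (by simp [sinTaylor]) hcos hy

theorem sub_cube_add_quintic_sub_septic_le_sin {y : ℝ} (hy : 0 ≤ y) :
    y - y ^ 3 / 6 + y ^ 5 / 120 - y ^ 7 / 5040 ≤ sin y := by
  have h := sin_sub_sinTaylor_alternating (n := 4) (by norm_num) hy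
  have h4 : sinTaylor 4 y = y - y ^ 3 / 6 + y ^ 5 / 120 - y ^ 7 / 5040 := by
    norm_num [sinTaylor, sum_range_succ, Nat.factorial]; ring
  rw [h4] at h
  linarith

end Real

theorem Polynomial.Chebyshev.T_real_sin_two_mul_add_one (n : ℕ) (θ : ℝ) :
    (T ℝ (2 * n + 1)).eval (sin θ) = (-1) ^ n * sin ((2 * n + 1) * θ) := by
  calc (T ℝ (2 * n + 1)).eval (sin θ)
      = cos (((2 * n + 1 : ℤ) : ℝ) * (π / 2 - θ)) := by rw [← T_real_cos, cos_pi_div_two_sub]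
    _ = cos (n * π - ((2 * n + 1) * θ - π / 2)) := by push_cast; ring_nf
    _ = (-1) ^ n * sin ((2 * n + 1) * θ) := by rw [cos_nat_mul_pi_sub, cos_sub_pi_div_two]

theorem Real.arcsin_mul_one_sub_sq_div_six_le {t b : ℝ} (ht : 0 ≤ t) (hb0 : 0 ≤ b)
    (hb : b < π / 2) (htb : t ≤ sin b) : arcsin t * (1 - b ^ 2 / 6) ≤ t := by
  set a := arcsin t
  have ha0 : 0 ≤ a := arcsin_nonneg.2 ht
  have hab : a ≤ b := (arcsin_le_iff_le_sin' ⟨by linarith, hb⟩).2 htb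
  have hsin : sin a = t := sin_arcsin (by linarith) (htb.trans (sin_le_one b))
  have := sin_ge_sub_cube ha0
  nlinarith [mul_le_mul hab hab ha0 hb0]

theorem cubic_sub_quintic_add_septic_le {x y : ℝ} (hx0 : 0 ≤ x) (hx4 : x ≤ 4) (hxy : x ≤ y)
    (hyx : y ≤ 384 / 383 * x) :
    y ^ 3 / 6 - y ^ 5 / 120 + y ^ 7 / 5040 ≤ x ^ 2 * (22 / 375 * x + 9 / 50) := by
  have hy0 : 0 ≤ y := hx0.trans hxy
  have h3 : y ^ 3 ≤ (384 / 383) ^ 3 * x ^ 3 := by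
    rw [← mul_pow]; exact pow_le_pow_left₀ hy0 hyx 3
  have h5 : x ^ 5 ≤ y ^ 5 := pow_le_pow_left₀ hx0 hxy 5
  have h7 : y ^ 7 ≤ (384 / 383) ^ 7 * x ^ 7 := by
    rw [← mul_pow]; exact pow_le_pow_left₀ hy0 hyx 7
  suffices (384 / 383) ^ 3 * x ^ 3 / 6 - x ^ 5 / 120 + (384 / 383) ^ 7 * x ^ 7 / 5040
      ≤ x ^ 2 * (22 / 375 * x + 9 / 50) by linarith
  have h : 0 ≤ x * (4 - x) := mul_nonneg hx0 (by linarith)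
  nlinarith [mul_nonneg h (sq_nonneg (x - 12 / 5)), mul_nonneg h (sq_nonneg (x ^ 2 - 29 / 5)),
    mul_nonneg (pow_nonneg hx0 3) (sq_nonneg (x - 12 / 5)), mul_nonneg h (sq_nonneg x)]

theorem abs_sin_mul_arcsin_sub_le {N t : ℝ} (hN : 63 ≤ N) (ht0 : 0 ≤ t) (ht1 : t ≤ 1) :
    |sin (N * arcsin t) - N * t| ≤ (N * t) ^ 2 * (22 / 375 * (N * t) + 9 / 50) := by
  set x := N * t with hx
  have hN0 : 0 ≤ N := by linarith
  have hx0 : 0 ≤ x := by positivity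
  rcases le_or_gt 4 x with hx4 | hx4
  · have hlow := neg_one_le_sin (N * arcsin t)
    have hup := sin_le_one (N * arcsin t)
    rw [abs_le]; constructor <;> nlinarith
  set a := arcsin t
  have ht : t ≤ 4 / 63 := by nlinarith
  have hsin : sin a = t := sin_arcsin (by linarith) ht1
  have ha0 : 0 ≤ a := arcsin_nonneg.2 ht0
  have hta : t ≤ a := hsin ▸ sin_le ha0
  have hat : a * (383 / 384) ≤ t := by
    have hsin_eighth : 4 / 63 ≤ sin (1 / 8) := by
      linarith [sin_ge_sub_cube (x := 1 / 8) (by norm_num)]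
    have h := arcsin_mul_one_sub_sq_div_six_le ht0 (b := 1 / 8) (by norm_num)
      (by linarith [pi_gt_three]) (ht.trans hsin_eighth)
    norm_num at h; linarith
  have hxy : x ≤ N * a := mul_le_mul_of_nonneg_left hta hN0
  have hyx : N * a ≤ 384 / 383 * x := by nlinarith
  rw [abs_le]; constructor
  · have hsin_ge := sub_cube_add_quintic_sub_septic_le_sin (mul_nonneg hN0 ha0)
    have hpoly := cubic_sub_quintic_add_septic_le hx0 hx4.le hxy hyx
    linarith
  · have hsin_le := sin_le (mul_nonneg hN0 ha0)
    have hcube : N * (a - t) ≤ N * (8 * t ^ 3 / 6) := by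
      have hsub_cube := sin_ge_sub_cube ha0
      have ha_cube := pow_le_pow_left₀ ha0 (show a ≤ 2 * t by linarith) 3
      gcongr; nlinarith
    have hN2 : 3969 ≤ N ^ 2 := by nlinarith
    have hsmall : N * (8 * t ^ 3 / 6) ≤ x ^ 2 * (22 / 375 * x) := by
      rw [hx]
      nlinarith [mul_le_mul_of_nonneg_right hN2 (by positivity : 0 ≤ N * t ^ 3)]
    nlinarith

theorem stmt19_general (ν : ℕ) (hν : 31 ≤ ν) (Q : Polynomial ℝ)
    (hQ : ∀ s : ℝ, (Polynomial.Chebyshev.T ℝ (2 * ν + 1)).eval s =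
      (-1 : ℝ) ^ ν * (2 * ν + 1) * s + s * Q.eval (s ^ 2))
    (t : ℝ) (ht0 : 0 < t) (ht1 : t ≤ 1) :
    |Q.eval (t ^ 2)| / ((2 * (ν : ℝ) + 1) ^ 2 * t) ≤
      ((176 * (ν : ℝ) ^ 3 + 1860 * ν ^ 2 + 100 * ν) / (375 * (2 * ν + 1) ^ 3)) * (2 * ν + 1) * t +
        (18 * (ν : ℝ) ^ 2 + 30 * ν) / (25 * (2 * ν + 1) ^ 2) := by
  have hν' : (31 : ℝ) ≤ ν := by exact_mod_cast hν
  set N : ℝ := 2 * ν + 1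
  set u₁ := (176 * (ν : ℝ) ^ 3 + 1860 * ν ^ 2 + 100 * ν) / (375 * N ^ 3)
  set u₂ := (18 * (ν : ℝ) ^ 2 + 30 * ν) / (25 * N ^ 2)
  have hu₁ : 22 / 375 ≤ u₁ := by
    rw [le_div_iff₀ (by positivity)]; nlinarith
  have hu₂ : 9 / 50 ≤ u₂ := by
    rw [le_div_iff₀ (by positivity)]; nlinarith
  have hQt : t * Q.eval (t ^ 2) = (-1) ^ ν * (sin (N * arcsin t) - N * t) := by
    have h := Polynomial.Chebyshev.T_real_sin_two_mul_add_one ν (arcsin t)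
    rw [sin_arcsin (by linarith) ht1, hQ] at h
    linear_combination h
  have hbound : |Q.eval (t ^ 2)| * t ≤ (u₁ * N * t + u₂) * (N ^ 2 * t) * t := calc
    |Q.eval (t ^ 2)| * t = |t * Q.eval (t ^ 2)| := by rw [abs_mul, abs_of_pos ht0, mul_comm]
    _ = |sin (N * arcsin t) - N * t| := by
      rw [hQt, abs_mul, abs_pow, abs_neg, abs_one, one_pow, one_mul]
    _ ≤ (N * t) ^ 2 * (22 / 375 * (N * t) + 9 / 50) :=
      abs_sin_mul_arcsin_sub_le (by linarith) ht0.le ht1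
    _ ≤ (N * t) ^ 2 * (u₁ * (N * t) + u₂) := by gcongr
    _ = (u₁ * N * t + u₂) * (N ^ 2 * t) * t := by ring
  rw [div_le_iff₀ (by positivity)]
  exact le_of_mul_le_mul_right hbound ht0

theorem stmt19 (ν : ℕ) (hν : 31 ≤ ν) (Q : Polynomial ℝ) (hQ0 : Q.eval 0 = 0)
    (hQ : ∀ s : ℝ, (Polynomial.Chebyshev.T ℝ (2 * ν + 1)).eval s =
      (-1 : ℝ) ^ ν * (2 * ν + 1) * s + s * Q.eval (s ^ 2))
    (t : ℝ) (ht0 : 0 < t) (ht1 : t ≤ 1)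
    (ht2 : (2 * (ν : ℝ) + 1) * t ≤ (2 * (ν : ℝ) + 1) / Real.sqrt 2) :
    |Q.eval (t ^ 2)| / ((2 * (ν : ℝ) + 1) ^ 2 * t) ≤
      ((176 * (ν : ℝ) ^ 3 + 1860 * ν ^ 2 + 100 * ν) / (375 * (2 * ν + 1) ^ 3)) * (2 * ν + 1) * t +
        (18 * (ν : ℝ) ^ 2 + 30 * ν) / (25 * (2 * ν + 1) ^ 2) :=
  stmt19_general ν hν Q hQ t ht0 ht1
end
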